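/- Let A ⊂ X be a closed acceptance set and S = (S_0, S_T) a traded asset with strictly increasing pricing functional π: ℝ → ℝ satisfying π(0) = 0. Define ρ_{A,S,π}(X) = inf{π(λ) : λ ∈ ℝ, X + λ S_T ∈ A}. Then ρ_{A,S,π}(X) = π(ρ_{A,S}(X)/S_0) for all X, and ρ_{A,S,π} is quasiconvex if and only if A is convex. -/

import Mathlib

open Filter Topology

variable {X : Type*} [AddCommGroup X] [Module ℝ X] [PartialOrder X]
  [CovariantClass X X (· + ·) (· ≤ ·)] [PosSMulMono ℝ X]
  [TopologicalSpace X] [IsTopologicalAddGroup X] [ContinuousSMul ℝ X]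

/-- The risk measure `ρ_{A,S}(x) = inf {m : x + (m/S₀)·S_T ∈ A}`, valued in `EReal`
(with `inf ∅ = ⊤` and unbounded-below giving `⊥`). -/
noncomputable def rho (A : Set X) (S0 : ℝ) (ST : X) (x : X) : EReal :=
  sInf ((fun r : ℝ => (r : EReal)) '' {r : ℝ | x + (r / S0) • ST ∈ A})

/-- A set is monotone if it contains, with any element, every larger element. -/
def MonotoneSet (A : Set X) : Prop := ∀ x ∈ A, ∀ y, x ≤ y → y ∈ A

/-- An acceptance set: nonempty, proper, and monotone. -/
def AcceptanceSet (A : Set X) : Prop := A.Nonempty ∧ A ≠ Set.univ ∧ MonotoneSet A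

/-- The algebraic core (algebraic interior) of a set. -/
def algCore (A : Set X) : Set X :=
  {x | ∀ y : X, ∃ ε > 0, ∀ l : ℝ, |l| < ε → x + l • y ∈ A}

/-- The risk measure with nonlinear pricing functional π:
ρ_{A,S,π}(x) = inf {π(λ) : x + λ·S_T ∈ A}. -/
noncomputable def rhoPi (A : Set X) (π : ℝ → ℝ) (ST : X) (x : X) : EReal :=
  sInf ((fun l : ℝ => (π l : EReal)) '' {l : ℝ | x + l • ST ∈ A})

/-- The extension of π to EReal, with π(⊤) = ⊤ and π(⊥) = lim_{λ→-∞} π(λ). -/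
noncomputable def piExt (π : ℝ → ℝ) (e : EReal) : EReal :=
  if e = ⊤ then ⊤
  else if e = ⊥ then Filter.liminf (fun l : ℝ => ((π l : ℝ) : EReal)) Filter.atBot
  else ((π e.toReal : ℝ) : EReal)

/-!
For fixed `x`, the set of admissible amounts `L = {l | x + l • S_T ∈ A}` is closed (as `A` is) and
upward closed (as `A` is monotone and `S_T ≥ 0`), so it is `∅`, all of `ℝ`, or a ray `[a, ∞)`.
In each case the infimum of the monotone `π` over `L` is `π` of the infimum of `L`, read through
the extension of `π` to `EReal`; substituting `l = m / S₀` identifies that infimum with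
`ρ_{A,S}(x) / S₀`. Because the infimum over a ray is attained, `ρ_{A,S,π}(x) ≤ π(0)` exactly
when `x ∈ A`, so convex sublevel sets force `A` to be convex. Conversely, for convex `A` the strict
sublevel sets are convex (raise both amounts to their maximum), and every sublevel set is an
intersection of strict ones.
-/

open Set

theorem IsUpperSet.eq_empty_or_eq_univ_or_eq_Ici {α : Type*} [ConditionallyCompleteLinearOrder α]
    [TopologicalSpace α] [OrderTopology α] {s : Set α} (hup : IsUpperSet s) (hs : IsClosed s) :
    s = ∅ ∨ s = univ ∨ ∃ a, s = Ici a := by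
  rcases s.eq_empty_or_nonempty with hempty | hne
  · exact Or.inl hempty
  by_cases hbdd : BddBelow s
  · refine Or.inr (Or.inr ⟨sInf s, Subset.antisymm (fun l hl => csInf_le hbdd hl) ?_⟩)
    exact fun l hl => hup hl (hs.csInf_mem hne hbdd)
  · refine Or.inr (Or.inl (eq_univ_of_forall fun l => ?_))
    obtain ⟨l', hl', hlt⟩ := not_bddBelow_iff.mp hbdd l
    exact hup hlt.le hl'

theorem EReal.sInf_range_coe : sInf (range ((↑) : ℝ → EReal)) = ⊥ := by
  rw [EReal.range_coe_eq_Ioo, csInf_Ioo bot_lt_top]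

theorem liminf_atBot_eq_sInf_range {ι α : Type*} [Preorder ι] [Nonempty ι] [IsCodirectedOrder ι]
    [CompleteLinearOrder α] [TopologicalSpace α] [OrderTopology α] {f : ι → α}
    (hf : Monotone f) : liminf f atBot = sInf (range f) :=
  (tendsto_atBot_iInf hf).liminf_eq

theorem Monotone.sInf_image_Ici {α β : Type*} [Preorder α] [CompleteLattice β] {g : α → β}
    (hg : Monotone g) (a : α) : sInf (g '' Ici a) = g a :=
  (hg.map_isLeast isLeast_Ici).csInf_eq

theorem sInf_image_coe_eq_piExt {L : Set ℝ} (hup : IsUpperSet L) (hL : IsClosed L) {f : ℝ → ℝ}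
    (hf : Monotone f) : sInf ((fun l => (f l : EReal)) '' L) = piExt f (sInf ((↑) '' L)) := by
  have hf' : Monotone fun l => (f l : EReal) := EReal.coe_strictMono.monotone.comp hf
  rcases hup.eq_empty_or_eq_univ_or_eq_Ici hL with rfl | rfl | ⟨a, rfl⟩
  · simp [piExt]
  · rw [image_univ, image_univ, EReal.sInf_range_coe, piExt, if_neg bot_ne_top, if_pos rfl,
      liminf_atBot_eq_sInf_range hf']
  · rw [hf'.sInf_image_Ici, EReal.coe_strictMono.monotone.sInf_image_Ici, piExt,
      if_neg (EReal.coe_ne_top _), if_neg (EReal.coe_ne_bot _), EReal.toReal_coe]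

theorem sInf_image_coe_le_coe_iff {L : Set ℝ} (hup : IsUpperSet L) (hL : IsClosed L)
    {f : ℝ → ℝ} (hf : StrictMono f) (l : ℝ) :
    sInf ((fun l => (f l : EReal)) '' L) ≤ f l ↔ l ∈ L := by
  have hf' : Monotone fun l => (f l : EReal) := EReal.coe_strictMono.monotone.comp hf.monotone
  refine ⟨fun h => ?_, fun hl => sInf_le ⟨l, hl, rfl⟩⟩
  rcases hup.eq_empty_or_eq_univ_or_eq_Ici hL with rfl | rfl | ⟨a, rfl⟩
  · simp at h
  · trivial
  · rw [hf'.sInf_image_Ici] at h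
    exact hf.le_iff_le.mp (EReal.coe_le_coe_iff.mp h)

theorem Convex.setOf_le_of_forall_setOf_lt {𝕜 E β : Type*} [Semiring 𝕜] [PartialOrder 𝕜]
    [AddCommMonoid E] [SMul 𝕜 E] [LinearOrder β] [DenselyOrdered β] {f : E → β}
    (h : ∀ b, Convex 𝕜 {x | f x < b}) (c : β) : Convex 𝕜 {x | f x ≤ c} := by
  intro x hx y hy s t hs ht hst
  exact le_of_forall_gt_imp_ge_of_dense fun b hb =>
    (h b (lt_of_le_of_lt hx hb) (lt_of_le_of_lt hy hb) hs ht hst).le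

def acceptanceRay {E : Type*} [AddCommGroup E] [Module ℝ E] (A : Set E) (ST x : E) : Set ℝ :=
  {l | x + l • ST ∈ A}

theorem isClosed_acceptanceRay {E : Type*} [AddCommGroup E] [Module ℝ E] [TopologicalSpace E]
    [ContinuousAdd E] [ContinuousSMul ℝ E] {A : Set E} (hA : IsClosed A) (ST x : E) :
    IsClosed (acceptanceRay A ST x) :=
  hA.preimage (continuous_const.add (continuous_id.smul continuous_const))

theorem isUpperSet_acceptanceRay {E : Type*} [AddCommGroup E] [PartialOrder E]
    [AddLeftMono E] [Module ℝ E] [PosSMulMono ℝ E] {A : Set E}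
    (hA : MonotoneSet A) {ST : E} (hST : 0 ≤ ST) (x : E) :
    IsUpperSet (acceptanceRay A ST x) := by
  intro l l' hll' hl
  refine hA _ hl _ ?_
  calc x + l • ST ≤ x + l • ST + (l' - l) • ST :=
        le_add_of_nonneg_right (smul_nonneg (sub_nonneg.mpr hll') hST)
    _ = x + l' • ST := by rw [add_assoc, ← add_smul, add_sub_cancel]

variable {A : Set X} {ST : X}

theorem rhoPi_eq_piExt_rho (hclosed : IsClosed A) (hmono : MonotoneSet A) (hST : 0 ≤ ST)
    {S0 : ℝ} (hS0 : 0 < S0) {π : ℝ → ℝ} (hπ : Monotone π) (x : X) :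
    rhoPi A π ST x = piExt (fun m => π (m / S0)) (rho A S0 ST x) := by
  have hdiv : Monotone (· / S0) := fun _ _ h => div_le_div_of_nonneg_right h hS0.le
  have hsurj : Function.Surjective (· / S0) := fun l => ⟨l * S0, mul_div_cancel_right₀ l hS0.ne'⟩
  have hrhoPi : rhoPi A π ST x =
      sInf ((fun m => (π (m / S0) : EReal)) '' ((· / S0) ⁻¹' acceptanceRay A ST x)) := by
    rw [← image_image (fun l => (π l : EReal)) (· / S0), image_preimage_eq _ hsurj]
    rfl
  rw [hrhoPi, rho]
  exact sInf_image_coe_eq_piExt ((isUpperSet_acceptanceRay hmono hST x).preimage hdiv)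
    ((isClosed_acceptanceRay hclosed ST x).preimage (continuous_id.div_const S0)) (hπ.comp hdiv)

theorem rhoPi_le_coe_iff (hclosed : IsClosed A) (hmono : MonotoneSet A) (hST : 0 ≤ ST)
    {π : ℝ → ℝ} (hπ : StrictMono π) (x : X) (l : ℝ) :
    rhoPi A π ST x ≤ π l ↔ x + l • ST ∈ A :=
  sInf_image_coe_le_coe_iff (isUpperSet_acceptanceRay hmono hST x)
    (isClosed_acceptanceRay hclosed ST x) hπ l

theorem convex_of_convex_setOf_rhoPi_le (hclosed : IsClosed A) (hmono : MonotoneSet A)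
    (hST : 0 ≤ ST) {π : ℝ → ℝ} (hπ : StrictMono π)
    (h : ∀ c : EReal, Convex ℝ {x : X | rhoPi A π ST x ≤ c}) : Convex ℝ A := by
  have hsub : {x : X | rhoPi A π ST x ≤ π 0} = A := by
    ext x
    exact (rhoPi_le_coe_iff hclosed hmono hST hπ x 0).trans (by rw [zero_smul, add_zero])
  simpa only [hsub] using h (π 0)

theorem convex_setOf_rhoPi_lt {E : Type*} [AddCommGroup E] [PartialOrder E] [AddLeftMono E]
    [Module ℝ E] [PosSMulMono ℝ E] {A : Set E} (hconv : Convex ℝ A) (hmono : MonotoneSet A)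
    {ST : E} (hST : 0 ≤ ST) {π : ℝ → ℝ} (hπ : Monotone π) (b : EReal) :
    Convex ℝ {x : E | rhoPi A π ST x < b} := by
  intro x hx y hy s t hs ht hst
  obtain ⟨_, ⟨lx, hlx, rfl⟩, hlxb⟩ := sInf_lt_iff.mp (show rhoPi A π ST x < b from hx)
  obtain ⟨_, ⟨ly, hly, rfl⟩, hlyb⟩ := sInf_lt_iff.mp (show rhoPi A π ST y < b from hy)
  set ν := max lx ly
  have hxν : x + ν • ST ∈ A := isUpperSet_acceptanceRay hmono hST x (le_max_left lx ly) hlx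
  have hyν : y + ν • ST ∈ A := isUpperSet_acceptanceRay hmono hST y (le_max_right lx ly) hly
  have hcomb : s • x + t • y + ν • ST ∈ A := by
    convert hconv hxν hyν hs ht hst using 1
    rw [smul_add, smul_add, add_add_add_comm, ← add_smul, hst, one_smul]
  have hπν : (π ν : EReal) < b :=
    (EReal.coe_strictMono.monotone.comp hπ).map_max.trans_lt (max_lt hlxb hlyb)
  show rhoPi A π ST (s • x + t • y) < b
  exact sInf_lt_iff.mpr ⟨_, ⟨ν, hcomb, rfl⟩, hπν⟩

theorem rhoPi_eq_and_quasiconvex_iff_convex (A : Set X) (S0 : ℝ) (ST : X)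
    (hA : AcceptanceSet A) (hclosed : IsClosed A)
    (hS0 : 0 < S0) (hST : 0 ≤ ST)
    (π : ℝ → ℝ) (hπ : StrictMono π) :
    (∀ x : X, rhoPi A π ST x = piExt (fun m : ℝ => π (m / S0)) (rho A S0 ST x)) ∧
    ((∀ c : EReal, Convex ℝ {x : X | rhoPi A π ST x ≤ c}) ↔ Convex ℝ A) := by
  obtain ⟨-, -, hmono⟩ := hA
  refine ⟨rhoPi_eq_piExt_rho hclosed hmono hST hS0 hπ.monotone,
    convex_of_convex_setOf_rhoPi_le hclosed hmono hST hπ, fun hconv => ?_⟩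
  exact Convex.setOf_le_of_forall_setOf_lt (convex_setOf_rhoPi_lt hconv hmono hST hπ.monotone)
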